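/- arXiv:1305.7372 — 8 statements merged into one kernel-verified Lean document; each statement's English description precedes it below -/
import Mathlib

section
/- For any $d \in \mathbb{N}$, $\Lambda > 0$, $\mu \in (0,1)$, there exists a constant $C = C(d,\Lambda,\mu) > 0$ such that: for every family of non-negative sequences $(a^k_\alpha)_{\alpha=0,\dots,d;\ k\in\mathbb{N}_0}$ satisfying $a^{k+1}_0 \le \Lambda$ and $a^{k+1}_\alpha \le \mu a^k_d + (1-\mu) a^k_{\alpha-1} + \Lambda$ for $\alpha = 1,\dots,d$ and all $k$, one has $\max_{0\le\alpha\le d} \limsup_{k\to\infty} a^k_\alpha \le C$. -/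
/-!
With weights `t ^ α` for a base `t` slightly below `1 / (1 - μ)`, the weighted sum
`b k = ∑_{α ≤ d} t ^ α * a k α` satisfies a contractive recursion `b (k + 1) ≤ θ * b k + c` with
`θ < 1`: the shift `a k (α - 1) ↦ a (k + 1) α` gains the factor `(1 - μ) * t < 1`, and the feedback
from `a k d` costs `μ * ∑_{α < d} t ^ (α + 1) < t ^ d`, which holds at `t = 1 / (1 - μ)` by the
geometric sum formula and hence nearby. So `limsup b ≤ c / (1 - θ)`, and every `a k α ≤ b k`.
-/

open Filter Finset Topology

def weightedSum (t : ℝ) (d : ℕ) (x : ℕ → ℝ) : ℝ :=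
  ∑ i ∈ range (d + 1), t ^ i * x i

lemma le_weightedSum {t : ℝ} {d α : ℕ} {x : ℕ → ℝ} (ht : 1 ≤ t) (hx : ∀ i ≤ d, 0 ≤ x i)
    (hα : α ≤ d) : x α ≤ weightedSum t d x :=
  calc x α ≤ t ^ α * x α := le_mul_of_one_le_left (hx α hα) (one_le_pow₀ ht)
    _ ≤ weightedSum t d x :=
      single_le_sum (f := fun i => t ^ i * x i)
        (fun i hi => mul_nonneg (by positivity) (hx i (Nat.lt_succ_iff.mp (mem_range.mp hi))))
        (mem_range.mpr (Nat.lt_succ_of_le hα))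

lemma weightedSum_le_mul_add {t μ Λ θ : ℝ} {d : ℕ} {x y : ℕ → ℝ} (ht : 0 ≤ t)
    (hx : ∀ i ≤ d, 0 ≤ x i) (hy₀ : y 0 ≤ Λ)
    (hy : ∀ i < d, y (i + 1) ≤ μ * x d + (1 - μ) * x i + Λ)
    (hθt : (1 - μ) * t ≤ θ) (hθμ : μ * ∑ i ∈ range d, t ^ (i + 1) ≤ θ * t ^ d) :
    weightedSum t d y ≤ θ * weightedSum t d x + weightedSum t d (fun _ => Λ) := by
  have hterm : ∀ i ∈ range d, t ^ (i + 1) * y (i + 1) ≤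
      μ * t ^ (i + 1) * x d + θ * (t ^ i * x i) + t ^ (i + 1) * Λ := by
    intro i hi
    have hi : i < d := mem_range.mp hi
    have hxi : 0 ≤ t ^ i * x i := mul_nonneg (pow_nonneg ht i) (hx i hi.le)
    calc t ^ (i + 1) * y (i + 1) ≤ t ^ (i + 1) * (μ * x d + (1 - μ) * x i + Λ) :=
          mul_le_mul_of_nonneg_left (hy i hi) (pow_nonneg ht _)
      _ = μ * t ^ (i + 1) * x d + ((1 - μ) * t) * (t ^ i * x i) + t ^ (i + 1) * Λ := by ring
      _ ≤ μ * t ^ (i + 1) * x d + θ * (t ^ i * x i) + t ^ (i + 1) * Λ := by gcongr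
  have hxd : μ * (∑ i ∈ range d, t ^ (i + 1)) * x d ≤ θ * (t ^ d * x d) := by
    rw [← mul_assoc]
    exact mul_le_mul_of_nonneg_right hθμ (hx d le_rfl)
  calc weightedSum t d y = ∑ i ∈ range d, t ^ (i + 1) * y (i + 1) + y 0 := by
        simp [weightedSum, sum_range_succ']
    _ ≤ ∑ i ∈ range d, (μ * t ^ (i + 1) * x d + θ * (t ^ i * x i) + t ^ (i + 1) * Λ) + Λ :=
        add_le_add (sum_le_sum hterm) hy₀
    _ = μ * (∑ i ∈ range d, t ^ (i + 1)) * x d + θ * ∑ i ∈ range d, t ^ i * x i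
          + (∑ i ∈ range d, t ^ (i + 1) * Λ + Λ) := by
        simp only [sum_add_distrib, ← sum_mul, ← mul_sum]
        ring
    _ ≤ θ * (t ^ d * x d) + θ * ∑ i ∈ range d, t ^ i * x i
          + (∑ i ∈ range d, t ^ (i + 1) * Λ + Λ) := by gcongr
    _ = θ * weightedSum t d x + weightedSum t d (fun _ => Λ) := by
        simp only [weightedSum, sum_range_succ, sum_range_succ' (fun i => t ^ i * Λ)]
        ring

lemma exists_weight_base {μ : ℝ} (hμ0 : 0 < μ) (hμ1 : μ < 1) (d : ℕ) :
    ∃ t, 1 ≤ t ∧ (1 - μ) * t < 1 ∧ μ * ∑ i ∈ range d, t ^ (i + 1) < t ^ d := by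
  set t₀ := (1 - μ)⁻¹
  have hμ' : 0 < 1 - μ := sub_pos.mpr hμ1
  have ht₀ : 1 < t₀ := one_lt_inv₀ hμ' |>.mpr (by linarith)
  have ht₀μ : (1 - μ) * t₀ = 1 := mul_inv_cancel₀ hμ'.ne'
  have hgap : 0 < t₀ ^ d - μ * ∑ i ∈ range d, t₀ ^ (i + 1) := by
    have hfeed : μ * ∑ i ∈ range d, t₀ ^ (i + 1) = t₀ ^ d - 1 := by
      simp only [pow_succ, ← sum_mul]
      linear_combination geom_sum_mul t₀ d - (∑ i ∈ range d, t₀ ^ i) * ht₀μ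
    linarith
  have hnear : ∀ᶠ t in 𝓝[<] t₀,
      1 < t ∧ t < t₀ ∧ 0 < t ^ d - μ * ∑ i ∈ range d, t ^ (i + 1) := by
    have hcont : Continuous fun t : ℝ => t ^ d - μ * ∑ i ∈ range d, t ^ (i + 1) := by fun_prop
    have hgap_near := hcont.continuousAt.eventually (lt_mem_nhds hgap)
    exact (eventually_nhdsWithin_of_eventually_nhds (lt_mem_nhds ht₀)).and
      (eventually_mem_nhdsWithin.and (eventually_nhdsWithin_of_eventually_nhds hgap_near))
  obtain ⟨t, ht1, htt₀, ht⟩ := hnear.exists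
  refine ⟨t, ht1.le, ?_, by linarith⟩
  calc (1 - μ) * t < (1 - μ) * t₀ := mul_lt_mul_of_pos_left htt₀ hμ'
    _ = 1 := ht₀μ

lemma exists_weight_contraction {μ : ℝ} (hμ0 : 0 < μ) (hμ1 : μ < 1) (d : ℕ) :
    ∃ t θ : ℝ, 1 ≤ t ∧ 0 ≤ θ ∧ θ < 1 ∧ (1 - μ) * t ≤ θ ∧
      μ * ∑ i ∈ range d, t ^ (i + 1) ≤ θ * t ^ d := by
  obtain ⟨t, ht1, hshift, hfeed⟩ := exists_weight_base hμ0 hμ1 d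
  have htd : 0 < t ^ d := by positivity
  refine ⟨t, max ((1 - μ) * t) (μ * (∑ i ∈ range d, t ^ (i + 1)) / t ^ d), ht1,
    le_max_of_le_left (by nlinarith), max_lt hshift ((div_lt_one htd).mpr hfeed),
    le_max_left _ _, ?_⟩
  rw [← div_le_iff₀ htd]
  exact le_max_right _ _

lemma le_pow_mul_add_of_le_mul_add {b : ℕ → ℝ} {θ c L : ℝ} (hθ : 0 ≤ θ) (hL : θ * L + c = L)
    (hb : ∀ k, b (k + 1) ≤ θ * b k + c) (k : ℕ) : b k ≤ θ ^ k * (b 0 - L) + L := by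
  induction k with
  | zero => simp
  | succ k ih =>
    calc b (k + 1) ≤ θ * b k + c := hb k
      _ ≤ θ * (θ ^ k * (b 0 - L) + L) + c := by gcongr
      _ = θ ^ (k + 1) * (b 0 - L) + L := by linear_combination hL

lemma limsup_le_of_le_pow_mul_add {u : ℕ → ℝ} {θ B L : ℝ} (hθ0 : 0 ≤ θ) (hθ1 : θ < 1)
    (hu : IsCoboundedUnder (· ≤ ·) atTop u) (h : ∀ k, u k ≤ θ ^ k * B + L) :
    limsup u atTop ≤ L := by
  have htend : Tendsto (fun k => θ ^ k * B + L) atTop (𝓝 L) := by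
    simpa using ((tendsto_pow_atTop_nhds_zero_of_lt_one hθ0 hθ1).mul_const B).add_const L
  calc limsup u atTop ≤ limsup (fun k => θ ^ k * B + L) atTop :=
        limsup_le_limsup (Eventually.of_forall h) hu htend.isBoundedUnder_le
    _ = L := htend.limsup_eq

theorem system_iteration_general (d : ℕ) (Λ μ : ℝ) (hΛ : 0 < Λ)
    (hμ0 : 0 < μ) (hμ1 : μ < 1) :
    ∃ C : ℝ, 0 < C ∧ ∀ a : ℕ → ℕ → ℝ,
      (∀ k α, α ≤ d → 0 ≤ a k α) →
      (∀ k, a (k + 1) 0 ≤ Λ) →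
      (∀ k α, 1 ≤ α → α ≤ d → a (k + 1) α ≤ μ * a k d + (1 - μ) * a k (α - 1) + Λ) →
      ∀ α ≤ d, Filter.limsup (fun k => a k α) Filter.atTop ≤ C := by
  obtain ⟨t, θ, ht, hθ0, hθ1, hθt, hθμ⟩ := exists_weight_contraction hμ0 hμ1 d
  set c := weightedSum t d (fun _ => Λ)
  set L := c / (1 - θ)
  have hc : Λ ≤ c := le_weightedSum ht (fun _ _ => hΛ.le) (Nat.zero_le d)
  have hL : θ * L + c = L := by linarith [mul_div_cancel₀ c (sub_pos.mpr hθ1).ne']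
  refine ⟨L, div_pos (hΛ.trans_le hc) (sub_pos.mpr hθ1), ?_⟩
  intro a ha h0 hrec α hα
  have hstep : ∀ k, weightedSum t d (a (k + 1)) ≤ θ * weightedSum t d (a k) + c := fun k =>
    weightedSum_le_mul_add (by linarith) (ha k) (h0 k)
      (fun i hi => by simpa using hrec k (i + 1) (by omega) (by omega)) hθt hθμ
  have hbound := le_pow_mul_add_of_le_mul_add (b := fun k => weightedSum t d (a k)) hθ0 hL hstep
  exact limsup_le_of_le_pow_mul_add hθ0 hθ1
    (isCoboundedUnder_le_of_le atTop fun k => ha k α hα)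
    fun k => (le_weightedSum ht (ha k) hα).trans (hbound k)

/-- Iteration estimate for systems of sequences (Proposition 2.2): for `d ∈ ℕ`, `Λ > 0`,
`μ ∈ (0,1)`, there is `C = C(d,Λ,μ) > 0` such that any family of non-negative sequences
`a^k_α`, `α = 0,…,d`, with `a^{k+1}_0 ≤ Λ` and
`a^{k+1}_α ≤ μ a^k_d + (1-μ) a^k_{α-1} + Λ` for `1 ≤ α ≤ d`,
satisfies `limsup_k a^k_α ≤ C` for every `α ≤ d`. -/
theorem system_iteration (d : ℕ) (hd : 1 ≤ d) (Λ μ : ℝ) (hΛ : 0 < Λ)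
    (hμ0 : 0 < μ) (hμ1 : μ < 1) :
    ∃ C : ℝ, 0 < C ∧ ∀ a : ℕ → ℕ → ℝ,
      (∀ k α, α ≤ d → 0 ≤ a k α) →
      (∀ k, a (k + 1) 0 ≤ Λ) →
      (∀ k α, 1 ≤ α → α ≤ d → a (k + 1) α ≤ μ * a k d + (1 - μ) * a k (α - 1) + Λ) →
      ∀ α ≤ d, Filter.limsup (fun k => a k α) Filter.atTop ≤ C :=
  system_iteration_general d Λ μ hΛ hμ0 hμ1
end

section
/- Given $\mu \in (0,1)$ and $C > 0$, for any $\delta > 0$, set $K = \lceil 2C/\delta \rceil + 2$. If a finite strictly binary tree $T$ satisfies $\sum_{t \notin \mathrm{leaf}(T)} \mu^{l(t)}(1-\mu)^{r(t)} \le C + C\sum_{t \in \mathrm{leaf}(T)} \mu^{l(t)}(1-\mu)^{r(t)}$ and has depth $d(T) \ge K$, then $\sum_{t: d(t)=d(T)} \mu^{l(t)}(1-\mu)^{r(t)} \le \delta$. -/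
open scoped Classical

/-- A finite strictly binary tree, encoded by the finite set of root-to-node paths
(`false` = left turn, `true` = right turn). The empty path is the root, the set of
paths is closed under taking parents, and children always come in (left,right)
pairs, i.e. every node has zero or exactly two children. -/
structure BinTree where
  nodes : Finset (List Bool)
  root_mem : ([] : List Bool) ∈ nodes
  parent_mem : ∀ (t : List Bool) (b : Bool), t ++ [b] ∈ nodes → t ∈ nodes
  sibling_mem : ∀ (t : List Bool) (b : Bool), t ++ [b] ∈ nodes → t ++ [!b] ∈ nodes

namespace BinTree

/-- A node is a leaf if it has no children. -/
def IsLeaf (T : BinTree) (t : List Bool) : Prop :=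
  t ∈ T.nodes ∧ ∀ b : Bool, t ++ [b] ∉ T.nodes

/-- The weight `μ^{l(t)} (1-μ)^{r(t)}` of a node, where `l(t)` and `r(t)` are the
numbers of left and right turns on the path from the root to `t`. -/
noncomputable def weight (μ : ℝ) (t : List Bool) : ℝ :=
  μ ^ (t.count false) * (1 - μ) ^ (t.count true)

/-- The maximal depth `d(T)` of the tree. -/
def depth (T : BinTree) : ℕ := T.nodes.sup List.length

/-- `a_i`: the total weight of all nodes at depth `i`. -/
noncomputable def layerSum (T : BinTree) (μ : ℝ) (i : ℕ) : ℝ :=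
  ∑ t ∈ T.nodes.filter (fun t => t.length = i), weight μ t

/-- `b_i`: the total weight of all leaves at depth `i`. -/
noncomputable def leafLayerSum (T : BinTree) (μ : ℝ) (i : ℕ) : ℝ :=
  ∑ t ∈ T.nodes.filter (fun t => t.length = i ∧ T.IsLeaf t), weight μ t

/-- The total weight of all leaves. -/
noncomputable def leafSum (T : BinTree) (μ : ℝ) : ℝ :=
  ∑ t ∈ T.nodes.filter (fun t => T.IsLeaf t), weight μ t

/-- The total weight of all interior (non-leaf) nodes. -/
noncomputable def nonleafSum (T : BinTree) (μ : ℝ) : ℝ :=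
  ∑ t ∈ T.nodes.filter (fun t => ¬ T.IsLeaf t), weight μ t

end BinTree

/-!
Each interior node `t` splits its weight exactly among its two children, since
`μ + (1 - μ) = 1`. Hence the weight `a_{i+1}` of layer `i + 1` is the weight of the interior
nodes of layer `i`, so `a_i = b_i + a_{i+1}` with `b_i` the leaf weight of layer `i`. As
`a_0 = 1` and the layers below `d(T)` are empty, the leaves carry total weight `1`, the
layer weights decrease, and the interior weight is `a_1 + ⋯ + a_d ≥ d · a_d`. The hypothesis
therefore gives `d · a_d ≤ 2C ≤ d δ`.
-/

open Finset

namespace BinTree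

variable (T : BinTree) {μ : ℝ}

lemma weight_nonneg (hμ0 : 0 ≤ μ) (hμ1 : μ ≤ 1) (t : List Bool) : 0 ≤ weight μ t :=
  mul_nonneg (pow_nonneg hμ0 _) (pow_nonneg (sub_nonneg.2 hμ1) _)

lemma weight_append_false_add_weight_append_true (μ : ℝ) (t : List Bool) :
    weight μ (t ++ [false]) + weight μ (t ++ [true]) = weight μ t := by
  simp only [weight, List.count_append, List.count_singleton_self, List.count_singleton,
    beq_iff_eq, Bool.true_eq_false, Bool.false_eq_true, if_false, add_zero, pow_succ]
  ring

lemma append_mem_nodes_of_not_isLeaf {t : List Bool} (ht : t ∈ T.nodes) (hleaf : ¬ T.IsLeaf t)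
    (b : Bool) : t ++ [b] ∈ T.nodes := by
  obtain ⟨b', hb'⟩ : ∃ b', t ++ [b'] ∈ T.nodes := by
    simpa only [IsLeaf, ht, true_and, not_forall, not_not] using hleaf
  rcases Bool.eq_or_eq_not b b' with rfl | rfl
  · exact hb'
  · exact T.sibling_mem t b' hb'

lemma length_le_depth {t : List Bool} (ht : t ∈ T.nodes) : t.length ≤ T.depth :=
  le_sup ht

lemma layerSum_zero : T.layerSum μ 0 = 1 := by
  have hroot : T.nodes.filter (fun t => t.length = 0) = {[]} := by
    ext t
    simp only [mem_filter, mem_singleton, List.length_eq_zero_iff, and_iff_right_iff_imp]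
    rintro rfl
    exact T.root_mem
  rw [layerSum, hroot, sum_singleton]
  simp [weight]

lemma layerSum_eq_zero_of_depth_lt {i : ℕ} (hi : T.depth < i) : T.layerSum μ i = 0 :=
  sum_eq_zero fun t ht => by
    have := T.length_le_depth (mem_filter.1 ht).1
    have := (mem_filter.1 ht).2
    omega

lemma layerSum_succ (i : ℕ) :
    T.layerSum μ (i + 1) =
      ∑ t ∈ T.nodes.filter (fun t => t.length = i ∧ ¬ T.IsLeaf t), weight μ t := by
  set S := T.nodes.filter (fun t => t.length = i ∧ ¬ T.IsLeaf t)
  have hlayer : T.nodes.filter (fun s => s.length = i + 1) =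
      (S ×ˢ univ).image (fun p : List Bool × Bool => p.1 ++ [p.2]) := by
    ext s
    simp only [S, mem_filter, mem_image, mem_product, mem_univ, and_true, Prod.exists]
    constructor
    · rintro ⟨hs, hlen⟩
      obtain ⟨t, b, rfl⟩ := s.eq_nil_or_concat'.resolve_left (by rintro rfl; simp at hlen)
      exact ⟨t, b, ⟨T.parent_mem t b hs, by simpa using hlen, fun h => h.2 b hs⟩, rfl⟩
    · rintro ⟨t, b, ⟨ht, hlen, hleaf⟩, rfl⟩
      exact ⟨T.append_mem_nodes_of_not_isLeaf ht hleaf b, by simp [hlen]⟩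
  have hinj :
      Set.InjOn (fun p : List Bool × Bool => p.1 ++ [p.2]) ↑(S ×ˢ (univ : Finset Bool)) :=
    fun p _ q _ h => by
      obtain ⟨h1, h2⟩ := List.append_inj' h rfl
      exact Prod.ext h1 (List.singleton_inj.1 h2)
  rw [layerSum, hlayer, sum_image hinj, sum_product]
  refine sum_congr rfl fun t _ => ?_
  rw [Fintype.sum_bool, add_comm, weight_append_false_add_weight_append_true]

lemma layerSum_eq_leafLayerSum_add (i : ℕ) :
    T.layerSum μ i = T.leafLayerSum μ i + T.layerSum μ (i + 1) := by
  rw [layerSum_succ, layerSum, leafLayerSum,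
    ← sum_filter_add_sum_filter_not (T.nodes.filter (fun t => t.length = i)) (T.IsLeaf ·),
    filter_filter, filter_filter]

lemma layerSum_antitone (hμ0 : 0 ≤ μ) (hμ1 : μ ≤ 1) : Antitone (T.layerSum μ) :=
  antitone_nat_of_succ_le fun i => by
    rw [T.layerSum_eq_leafLayerSum_add i]
    exact le_add_of_nonneg_left (sum_nonneg fun t _ => weight_nonneg hμ0 hμ1 t)

lemma sum_range_leafLayerSum (n : ℕ) :
    ∑ i ∈ range n, T.leafLayerSum μ i = 1 - T.layerSum μ n := by
  induction n with
  | zero => simp [layerSum_zero]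
  | succ n ih =>
    rw [sum_range_succ, ih, T.layerSum_eq_leafLayerSum_add n]
    ring

lemma sum_filter_eq_sum_range_depth (p : List Bool → Prop) [DecidablePred p]
    (f : List Bool → ℝ) :
    ∑ t ∈ T.nodes.filter p, f t =
      ∑ i ∈ range (T.depth + 1), ∑ t ∈ T.nodes.filter (fun t => t.length = i ∧ p t), f t := by
  rw [← sum_fiberwise_of_maps_to (g := List.length) (t := range (T.depth + 1))
    (fun t ht => mem_range.2 (Nat.lt_succ_of_le (T.length_le_depth (mem_filter.1 ht).1)))]
  refine sum_congr rfl fun i _ => ?_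
  rw [filter_filter]
  exact sum_congr (filter_congr fun t _ => and_comm) fun _ _ => rfl

lemma leafSum_eq_one : T.leafSum μ = 1 := by
  rw [leafSum, sum_filter_eq_sum_range_depth]
  change ∑ i ∈ range (T.depth + 1), T.leafLayerSum μ i = 1
  rw [sum_range_leafLayerSum, T.layerSum_eq_zero_of_depth_lt (Nat.lt_succ_self _), sub_zero]

lemma nonleafSum_eq_sum_range_layerSum :
    T.nonleafSum μ = ∑ i ∈ range T.depth, T.layerSum μ (i + 1) := by
  rw [nonleafSum, sum_filter_eq_sum_range_depth, sum_range_succ]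
  simp only [← layerSum_succ]
  rw [T.layerSum_eq_zero_of_depth_lt (Nat.lt_succ_self _), add_zero]

lemma depth_mul_layerSum_depth_le_nonleafSum (hμ0 : 0 ≤ μ) (hμ1 : μ ≤ 1) :
    T.depth * T.layerSum μ T.depth ≤ T.nonleafSum μ := by
  rw [nonleafSum_eq_sum_range_layerSum]
  simpa using card_nsmul_le_sum (range T.depth) (fun i => T.layerSum μ (i + 1))
    (T.layerSum μ T.depth) fun i hi => T.layerSum_antitone hμ0 hμ1 (mem_range.1 hi)

end BinTree

theorem sparsity_general (μ C δ : ℝ) (hμ0 : 0 < μ) (hμ1 : μ < 1) (hδ : 0 < δ)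
    (T : BinTree)
    (hsum : T.nonleafSum μ ≤ C + C * T.leafSum μ)
    (hdepth : ⌈2 * C / δ⌉₊ + 2 ≤ T.depth) :
    T.layerSum μ T.depth ≤ δ := by
  have hdepth_pos : (0 : ℝ) < T.depth := by exact_mod_cast (by omega : 0 < T.depth)
  have h2C : 2 * C ≤ δ * T.depth := by
    have := (Nat.le_ceil (2 * C / δ)).trans
      (Nat.cast_le.2 (by omega : ⌈2 * C / δ⌉₊ ≤ T.depth))
    rw [div_le_iff₀ hδ] at this
    linarith
  refine le_of_mul_le_mul_left ?_ hdepth_pos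
  calc T.depth * T.layerSum μ T.depth
      ≤ T.nonleafSum μ := T.depth_mul_layerSum_depth_le_nonleafSum hμ0.le hμ1.le
    _ ≤ 2 * C := by rw [T.leafSum_eq_one] at hsum; linarith
    _ ≤ T.depth * δ := by linarith

/-- Sparsity estimate for game trees (Proposition 3.1): if
`∑_{t ∉ leaf T} μ^{l(t)}(1-μ)^{r(t)} ≤ C + C ∑_{t ∈ leaf T} μ^{l(t)}(1-μ)^{r(t)}`
and the depth of `T` is at least `K = ⌈2C/δ⌉ + 2`, then the total weight of the
nodes at maximal depth is at most `δ`. -/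
theorem sparsity (μ C δ : ℝ) (hμ0 : 0 < μ) (hμ1 : μ < 1) (hC : 0 < C) (hδ : 0 < δ)
    (T : BinTree)
    (hsum : T.nonleafSum μ ≤ C + C * T.leafSum μ)
    (hdepth : ⌈2 * C / δ⌉₊ + 2 ≤ T.depth) :
    T.layerSum μ T.depth ≤ δ :=
  sparsity_general μ C δ hμ0 hμ1 hδ T hsum hdepth
end

section
/- Let $X$ be a set, $Y \subsetneq X$ nonempty with $X \setminus Y$ nonempty, and for each $x \in Y$ a nonempty set $B(x) \subseteq X$ such that every $x \in Y$ can be connected to $X \setminus Y$ by a chain of length at most $d$ through the sets $B(\cdot)$. Let $\mu \in (0,1)$, $\Lambda > 0$. Suppose $u_k: X \to \mathbb{R}$, $k \in \mathbb{N}_0$, satisfy $\sup_X u_0 < \infty$, and $u_{k+1}(x) \le \mu \sup_X u_k + (1-\mu)\inf_{B(x)} u_k + \Lambda$ for $x \in Y$, $u_{k+1}(x) \le \Lambda$ for $x \in X \setminus Y$. Then there is a constant $C = C(\mu,\Lambda,d)$, independent of $u_0$, with $\limsup_{k\to\infty} \sup_X u_k \le C$. -/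
/-!
Write `S k = sup u_k` and `ρ = 1 - μ`. Following an exit chain `x = c₀, c₁, …, c_m ∉ Y`
backwards from its endpoint, where `u ≤ Λ`, each step of the iteration trades a factor `ρ` of
the window bound `W` on `S` for an additive `Λ`, so that `u_n(x) ≤ (1 - ρ^m) W + Λ / μ` whenever
`S ≤ W` on the `m` previous steps. Since every chain has length `< d`, the excess
`max (S n - C) 0` over `C = Λ / (μ ρ^d)` contracts by the factor `1 - ρ^d` over every window
of `d` steps, hence tends to `0`.
-/

open Set Filter Topology

/-- `0 ≤ L` covers the junk value `limsup u f = 0` when `u` is not cobounded. -/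
theorem limsup_le_of_le_of_tendsto {ι : Type*} {f : Filter ι} [f.NeBot] {u v : ι → ℝ} {L : ℝ}
    (hL : 0 ≤ L) (huv : ∀ i, u i ≤ v i) (hv : Tendsto v f (𝓝 L)) : limsup u f ≤ L := by
  by_cases hu : f.IsCoboundedUnder (· ≤ ·) u
  · exact (limsup_le_limsup (Eventually.of_forall huv) hu hv.isBoundedUnder_le).trans
      hv.limsup_eq.le
  · rw [Real.limsup_of_not_isCoboundedUnder hu]
    exact hL

def ContractsOnWindows (a : ℕ → ℝ) (α : ℝ) (d : ℕ) : Prop :=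
  ∀ n, d ≤ n → ∀ W, 0 ≤ W → (∀ s, n - d ≤ s → s < n → a s ≤ W) → a n ≤ α * W

namespace ContractsOnWindows

variable {a : ℕ → ℝ} {α : ℝ} {d : ℕ}

theorem le_sum_range (h : ContractsOnWindows a α d) (ha : ∀ n, 0 ≤ a n) (hα : α ≤ 1) (n : ℕ) :
    a n ≤ ∑ i ∈ Finset.range d, a i := by
  have hR : 0 ≤ ∑ i ∈ Finset.range d, a i := Finset.sum_nonneg fun i _ => ha i
  induction n using Nat.strong_induction_on with
  | _ n ih =>
    by_cases hn : n < d
    · exact Finset.single_le_sum (fun i _ => ha i) (Finset.mem_range.2 hn)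
    · calc a n ≤ α * ∑ i ∈ Finset.range d, a i :=
            h n (by omega) _ hR fun s _ hs => ih s hs
        _ ≤ ∑ i ∈ Finset.range d, a i := mul_le_of_le_one_left hR hα

theorem le_pow_mul (h : ContractsOnWindows a α d) (hα : 0 ≤ α) {R : ℝ} (hR : 0 ≤ R)
    (haR : ∀ n, a n ≤ R) (j : ℕ) :
    ∀ n, d * j ≤ n → a n ≤ α ^ j * R := by
  induction j with
  | zero =>
    intro n _
    simpa using haR n
  | succ j ih =>
    intro n hn
    rw [Nat.mul_succ] at hn
    rw [pow_succ', mul_assoc]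
    exact h n (by omega) _ (by positivity) fun s hs _ => ih s (by omega)

theorem tendsto_zero (h : ContractsOnWindows a α d) (ha : ∀ n, 0 ≤ a n) (hα₀ : 0 ≤ α)
    (hα₁ : α < 1) (hd : 0 < d) : Tendsto a atTop (𝓝 0) := by
  set R := ∑ i ∈ Finset.range d, a i
  have hR : 0 ≤ R := Finset.sum_nonneg fun i _ => ha i
  have hbound : ∀ n, a n ≤ α ^ (n / d) * R := fun n =>
    h.le_pow_mul hα₀ hR (h.le_sum_range ha hα₁.le) _ n (Nat.mul_div_le n d)
  have hlim : Tendsto (fun n => α ^ (n / d) * R) atTop (𝓝 0) := by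
    simpa using ((tendsto_pow_atTop_nhds_zero_of_lt_one hα₀ hα₁).comp
      (Nat.tendsto_div_const_atTop hd.ne')).mul_const R
  exact squeeze_zero ha hbound hlim

end ContractsOnWindows

/-- Also valid when `sInf s` is the junk value `0` of a set unbounded below. -/
theorem Real.sInf_le_of_mem_of_le {s : Set ℝ} {x a : ℝ} (hx : x ∈ s) (hxa : x ≤ a)
    (ha : 0 ≤ a) : sInf s ≤ a := by
  by_cases hs : BddBelow s
  · exact csInf_le_of_le hs hx hxa
  · exact (Real.sInf_of_not_bddBelow hs).trans_le ha

def IsExitChain {X : Type*} (Y : Set X) (B : X → Set X) (x : X) (m : ℕ) (c : ℕ → X) : Prop :=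
  c 0 = x ∧ c m ∉ Y ∧ ∀ i, 1 ≤ i → i ≤ m → c i ∈ B (c (i - 1))

structure IsSubsolutionIteration {X : Type*} (μ Λ : ℝ) (Y : Set X) (B : X → Set X)
    (u : ℕ → X → ℝ) : Prop where
  le_of_mem : ∀ k, ∀ x ∈ Y,
    u (k + 1) x ≤ μ * sSup (range (u k)) + (1 - μ) * sInf (u k '' B x) + Λ
  le_of_notMem : ∀ k, ∀ x ∉ Y, u (k + 1) x ≤ Λ

section Iteration

variable {X : Type*} {Y : Set X} {B : X → Set X} {u : ℕ → X → ℝ} {μ Λ : ℝ} {d : ℕ}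

theorem IsExitChain.tail {x : X} {m : ℕ} {c : ℕ → X} (h : IsExitChain Y B x (m + 1) c) :
    c 1 ∈ B x ∧ IsExitChain Y B (c 1) m fun i => c (i + 1) := by
  obtain ⟨rfl, hm, hc⟩ := h
  refine ⟨hc 1 le_rfl (by omega), rfl, hm, fun i hi him => ?_⟩
  simpa [Nat.sub_add_cancel hi] using hc (i + 1) (by omega) (by omega)

theorem exists_isExitChain (hchain : ∀ x ∈ Y, ∃ m < d, ∃ c, IsExitChain Y B x m c)
    (hd : 0 < d) (x : X) : ∃ m < d, ∃ c, IsExitChain Y B x m c := by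
  by_cases hx : x ∈ Y
  · exact hchain x hx
  · exact ⟨0, hd, fun _ => x, rfl, hx, fun i h₁ h₂ => absurd h₂ (by omega)⟩

namespace IsSubsolutionIteration

theorem le_of_mem_of_le (h : IsSubsolutionIteration μ Λ Y B u) (hμ₀ : 0 ≤ μ) (hμ₁ : μ ≤ 1)
    {k : ℕ} {x b : X} {W V : ℝ} (hx : x ∈ Y) (hb : b ∈ B x) (hW : 0 ≤ W) (hu : ∀ y, u k y ≤ W)
    (hV : 0 ≤ V) (hbV : u k b ≤ V) : u (k + 1) x ≤ μ * W + (1 - μ) * V + Λ := by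
  have : 0 ≤ 1 - μ := sub_nonneg.2 hμ₁
  calc u (k + 1) x ≤ μ * sSup (range (u k)) + (1 - μ) * sInf (u k '' B x) + Λ :=
        h.le_of_mem k x hx
    _ ≤ μ * W + (1 - μ) * V + Λ := by
        gcongr
        · exact Real.sSup_le (forall_mem_range.2 hu) hW
        · exact Real.sInf_le_of_mem_of_le ⟨b, hb, rfl⟩ hbV hV

theorem bddAbove_range (h : IsSubsolutionIteration μ Λ Y B u) (hμ₀ : 0 ≤ μ) (hμ₁ : μ ≤ 1)
    (hB : ∀ x ∈ Y, (B x).Nonempty) (h₀ : BddAbove (range (u 0))) (k : ℕ) :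
    BddAbove (range (u k)) := by
  induction k with
  | zero => exact h₀
  | succ k ih =>
    set W := max (sSup (range (u k))) 0
    have hW : 0 ≤ W := le_max_right _ _
    have hu : ∀ y, u k y ≤ W := fun y => (le_csSup ih ⟨y, rfl⟩).trans (le_max_left _ _)
    refine ⟨W + Λ, forall_mem_range.2 fun x => ?_⟩
    by_cases hx : x ∈ Y
    · obtain ⟨b, hb⟩ := hB x hx
      calc u (k + 1) x ≤ μ * W + (1 - μ) * W + Λ :=
            h.le_of_mem_of_le hμ₀ hμ₁ hx hb hW hu hW (hu b)
        _ = W + Λ := by ring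
    · linarith [h.le_of_notMem k x hx]

theorem le_of_isExitChain (h : IsSubsolutionIteration μ Λ Y B u) (hμ₀ : 0 < μ) (hμ₁ : μ ≤ 1)
    (hΛ : 0 ≤ Λ) {W : ℝ} (hW : 0 ≤ W) {m : ℕ} :
    ∀ {x : X} {c : ℕ → X} {n : ℕ}, IsExitChain Y B x m c → m < n →
      (∀ s, n - m ≤ s → s < n → ∀ y, u s y ≤ W) → u n x ≤ (1 - (1 - μ) ^ m) * W + Λ / μ := by
  have hΛμ : Λ ≤ Λ / μ := le_div_self hΛ hμ₀ hμ₁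
  induction m with
  | zero =>
    rintro x c n ⟨rfl, hc, -⟩ hn -
    obtain ⟨n, rfl⟩ := Nat.exists_eq_add_of_lt hn
    simpa using (h.le_of_notMem n _ hc).trans hΛμ
  | succ m ih =>
    intro x c n hc hn hu
    obtain ⟨n, rfl⟩ : ∃ n', n = n' + 1 := ⟨n - 1, by omega⟩
    have hρ : ∀ j, 0 ≤ (1 - (1 - μ) ^ j) * W := fun j =>
      mul_nonneg (sub_nonneg.2 (pow_le_one₀ (by linarith) (by linarith))) hW
    by_cases hx : x ∈ Y
    · obtain ⟨hb, hc'⟩ := hc.tail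
      have hnext := ih (n := n) hc' (by omega) fun s hs₁ hs₂ => hu s (by omega) (by omega)
      calc u (n + 1) x ≤ μ * W + (1 - μ) * ((1 - (1 - μ) ^ m) * W + Λ / μ) + Λ :=
            h.le_of_mem_of_le hμ₀.le hμ₁ hx hb hW (hu n (by omega) (by omega))
              (by linarith [hρ m, div_nonneg hΛ hμ₀.le]) hnext
        _ = (1 - (1 - μ) ^ (m + 1)) * W + Λ / μ := by field_simp; ring
    · linarith [h.le_of_notMem n x hx, hρ (m + 1)]

theorem le_of_window (h : IsSubsolutionIteration μ Λ Y B u) (hμ₀ : 0 < μ) (hμ₁ : μ ≤ 1)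
    (hΛ : 0 ≤ Λ) (hchain : ∀ x, ∃ m < d, ∃ c, IsExitChain Y B x m c) {W : ℝ} (hW : 0 ≤ W) {n : ℕ}
    (hn : d ≤ n) (hu : ∀ s, n - d ≤ s → s < n → ∀ y, u s y ≤ W) (x : X) :
    u n x ≤ (1 - (1 - μ) ^ d) * W + Λ / μ := by
  obtain ⟨m, hm, c, hc⟩ := hchain x
  have hpow : (1 - μ) ^ d ≤ (1 - μ) ^ m :=
    pow_le_pow_of_le_one (by linarith) (by linarith) hm.le
  calc u n x ≤ (1 - (1 - μ) ^ m) * W + Λ / μ :=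
        h.le_of_isExitChain hμ₀ hμ₁ hΛ hW hc (by omega) fun s hs₁ hs₂ => hu s (by omega) hs₂
    _ ≤ (1 - (1 - μ) ^ d) * W + Λ / μ := by gcongr

theorem tendsto_excess (h : IsSubsolutionIteration μ Λ Y B u) (hμ₀ : 0 < μ) (hμ₁ : μ < 1)
    (hΛ : 0 ≤ Λ) (hd : 0 < d) (hchain : ∀ x, ∃ m < d, ∃ c, IsExitChain Y B x m c)
    (hbdd : ∀ k, BddAbove (range (u k))) :
    Tendsto (fun n => max (sSup (range (u n)) - Λ / (μ * (1 - μ) ^ d)) 0) atTop (𝓝 0) := by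
  set C := Λ / (μ * (1 - μ) ^ d)
  have hρ : 0 < 1 - μ := sub_pos.2 hμ₁
  have hC : 0 ≤ C := by positivity
  have hρd : (1 - μ) ^ d < 1 := pow_lt_one₀ hρ.le (by linarith) hd.ne'
  have hfix : (1 - (1 - μ) ^ d) * C + Λ / μ = C := by
    simp only [C]
    field_simp
    ring
  have hα₀ : 0 ≤ 1 - (1 - μ) ^ d := by linarith
  have hα₁ : 1 - (1 - μ) ^ d < 1 := by linarith [pow_pos hρ d]
  refine ContractsOnWindows.tendsto_zero (fun n hn W hW hwin => ?_) (fun n => le_max_right _ _)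
    hα₀ hα₁ hd
  have hu : ∀ s, n - d ≤ s → s < n → ∀ y, u s y ≤ C + W := fun s hs₁ hs₂ y => by
    linarith [le_csSup (hbdd s) ⟨y, rfl⟩, le_max_left (sSup (range (u s)) - C) 0,
      hwin s hs₁ hs₂]
  have hαW : 0 ≤ (1 - (1 - μ) ^ d) * W := mul_nonneg hα₀ hW
  have hS : sSup (range (u n)) ≤ C + (1 - (1 - μ) ^ d) * W :=
    Real.sSup_le (forall_mem_range.2 fun x => by
      linarith [h.le_of_window hμ₀ hμ₁.le hΛ hchain (add_nonneg hC hW) hn hu x]) (by linarith)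
  exact max_le (by linarith) hαW

end IsSubsolutionIteration

end Iteration

/-- Boundedness of the iteration (Theorem 3.1(i)): in an admissible setup of
"diameter" `d`, there is a constant `C = C(μ,Λ,d)`, independent of the setup and
of `u₀`, bounding `limsup_k sup_X u_k` for any sequence satisfying the
subsolution-type iteration inequalities. -/
theorem boundedness_iteration (μ Λ : ℝ) (hμ0 : 0 < μ) (hμ1 : μ < 1) (hΛ : 0 < Λ)
    (d : ℕ) :
    ∃ C : ℝ, 0 < C ∧ ∀ (X : Type) (Y : Set X) (B : X → Set X),
      Y.Nonempty → Yᶜ.Nonempty → (∀ x ∈ Y, (B x).Nonempty) →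
      (∀ x ∈ Y, ∃ m < d, ∃ c : ℕ → X, c 0 = x ∧ c m ∉ Y ∧
        ∀ i, 1 ≤ i → i ≤ m → c i ∈ B (c (i - 1))) →
      ∀ u : ℕ → X → ℝ,
        BddAbove (Set.range (u 0)) →
        (∀ k, ∀ x ∈ Y,
          u (k + 1) x ≤ μ * sSup (Set.range (u k)) + (1 - μ) * sInf (u k '' B x) + Λ) →
        (∀ k, ∀ x ∉ Y, u (k + 1) x ≤ Λ) →
        Filter.limsup (fun k => sSup (Set.range (u k))) Filter.atTop ≤ C := by
  have hρ : 0 < 1 - μ := sub_pos.2 hμ1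
  refine ⟨Λ / (μ * (1 - μ) ^ d), by positivity, ?_⟩
  intro X Y B ⟨y, hy⟩ _ hB hchain u hu₀ hY hYc
  have h : IsSubsolutionIteration μ Λ Y B u := ⟨hY, hYc⟩
  have hd : 0 < d := by
    obtain ⟨m, hm, -⟩ := hchain y hy
    omega
  have hexcess := h.tendsto_excess hμ0 hμ1 hΛ.le hd (exists_isExitChain hchain hd)
    (h.bddAbove_range hμ0.le hμ1.le hB hu₀)
  refine limsup_le_of_le_of_tendsto (by positivity) (fun n => ?_)
    (by simpa using hexcess.const_add (Λ / (μ * (1 - μ) ^ d)))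
  linarith [le_max_left (sSup (range (u n)) - Λ / (μ * (1 - μ) ^ d)) 0]
end

section
/- In the admissible setup with finite diameter $d$, let $\mu \in (0,1)$, $\Lambda > 0$. If $u: X \to \mathbb{R}$ satisfies $\sup_X u < \infty$, $u(x) \le \mu \sup_X u + (1-\mu)\inf_{B(x)} u + \Lambda$ for all $x \in Y$, and $u(x) \le \Lambda$ for $x \in X \setminus Y$, then $\sup_X u \le C$ for a constant $C$ depending only on $\mu$, $\Lambda$, $d$. -/
/-!
Set `M = sup u` (only `M > 0` is interesting). Walking a `B`-chain from `x` to the complement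
of `Y` backwards, the subsolution inequality propagates the bound `u ≤ Λ` at the end of the chain
to `u ≤ (1 - (1 - μ)^m) M + Λ / μ` at a point `m` steps away, since the infimum over `B(x)` is at
most the value at the next point of the chain. Taking the supremum over `x` gives
`M ≤ (1 - (1 - μ)^d) M + Λ / μ`, i.e. `M ≤ Λ / (μ (1 - μ)^d)`.
-/

/-- `sInf` of an unbounded-below set of reals is `0`, hence the sign condition on `t`. -/
lemma Real.sInf_le_of_mem_of_le_of_nonneg {s : Set ℝ} {x t : ℝ} (hx : x ∈ s) (hxt : x ≤ t)
    (ht : 0 ≤ t) : sInf s ≤ t := by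
  by_cases h : BddBelow s
  · exact csInf_le_of_le h hx hxt
  · exact (Real.sInf_of_not_bddBelow h).le.trans ht

namespace BoundednessSubsolution

/-- The bound on `u` at a point joined to the complement of `Y` by a chain of length `m`. -/
noncomputable def chainBound (μ Λ M : ℝ) (m : ℕ) : ℝ := (1 - (1 - μ) ^ m) * M + Λ / μ

section ChainBound

variable {μ Λ M : ℝ}

lemma chainBound_zero : chainBound μ Λ M 0 = Λ / μ := by
  simp [chainBound]

lemma chainBound_succ (hμ : μ ≠ 0) (m : ℕ) :
    chainBound μ Λ M (m + 1) = μ * M + (1 - μ) * chainBound μ Λ M m + Λ := by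
  simp only [chainBound]
  field_simp
  ring

lemma chainBound_mono (hμ0 : 0 ≤ μ) (hμ1 : μ ≤ 1) (hM : 0 ≤ M) :
    Monotone (chainBound μ Λ M) := fun m n hmn ↦ by
  have : (1 - μ) ^ n ≤ (1 - μ) ^ m := pow_le_pow_of_le_one (by linarith) (by linarith) hmn
  unfold chainBound
  gcongr

lemma le_chainBound (hμ0 : 0 < μ) (hμ1 : μ ≤ 1) (hΛ : 0 ≤ Λ) (hM : 0 ≤ M) (m : ℕ) :
    Λ ≤ chainBound μ Λ M m := calc
  Λ ≤ Λ / μ := le_div_self hΛ hμ0 hμ1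
  _ = chainBound μ Λ M 0 := chainBound_zero.symm
  _ ≤ chainBound μ Λ M m := chainBound_mono hμ0.le hμ1 hM m.zero_le

lemma le_div_of_le_chainBound (hμ1 : μ < 1) {d : ℕ}
    (h : M ≤ chainBound μ Λ M d) : M ≤ Λ / (μ * (1 - μ) ^ d) := by
  have hpow : 0 < (1 - μ) ^ d := pow_pos (by linarith) d
  rw [← div_div, le_div_iff₀ hpow]
  unfold chainBound at h
  linarith

end ChainBound

section Subsolution

variable {X : Type*} {Y : Set X} {B : X → Set X} {u : X → ℝ} {μ Λ M : ℝ}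

theorem le_chainBound_of_chain (hμ0 : 0 < μ) (hμ1 : μ ≤ 1) (hΛ : 0 ≤ Λ) (hM : 0 ≤ M)
    (hsub : ∀ x ∈ Y, u x ≤ μ * M + (1 - μ) * sInf (u '' B x) + Λ)
    (hout : ∀ x ∉ Y, u x ≤ Λ) :
    ∀ (m : ℕ) (c : ℕ → X), c m ∉ Y → (∀ i < m, c (i + 1) ∈ B (c i)) →
      u (c 0) ≤ chainBound μ Λ M m := by
  intro m
  induction m with
  | zero =>
    intro c hc _
    exact (hout _ hc).trans (le_chainBound hμ0 hμ1 hΛ hM 0)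
  | succ m ih =>
    intro c hcm hchain
    by_cases hc0 : c 0 ∈ Y
    · have htail : u (c 1) ≤ chainBound μ Λ M m :=
        ih (fun i ↦ c (i + 1)) hcm fun i hi ↦ hchain (i + 1) (by omega)
      have hinf : sInf (u '' B (c 0)) ≤ chainBound μ Λ M m :=
        Real.sInf_le_of_mem_of_le_of_nonneg ⟨c 1, hchain 0 m.succ_pos, rfl⟩ htail
          (hΛ.trans (le_chainBound hμ0 hμ1 hΛ hM m))
      calc u (c 0) ≤ μ * M + (1 - μ) * sInf (u '' B (c 0)) + Λ := hsub _ hc0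
        _ ≤ μ * M + (1 - μ) * chainBound μ Λ M m + Λ := by
          have := sub_nonneg.2 hμ1
          gcongr
        _ = chainBound μ Λ M (m + 1) := (chainBound_succ hμ0.ne' m).symm
    · exact (hout _ hc0).trans (le_chainBound hμ0 hμ1 hΛ hM _)

end Subsolution

end BoundednessSubsolution

open BoundednessSubsolution in
/-- Boundedness of subsolutions (Theorem 3.1(ii)): in an admissible setup of
"diameter" `d`, any `u` with `sup_X u < ∞` satisfying
`u(x) ≤ μ sup_X u + (1-μ) inf_{B(x)} u + Λ` on `Y` and `u ≤ Λ` off `Y`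
satisfies `sup_X u ≤ C` for a constant `C = C(μ,Λ,d)`. -/
theorem boundedness_subsolution (μ Λ : ℝ) (hμ0 : 0 < μ) (hμ1 : μ < 1) (hΛ : 0 < Λ)
    (d : ℕ) :
    ∃ C : ℝ, 0 < C ∧ ∀ (X : Type) (Y : Set X) (B : X → Set X),
      Y.Nonempty → Yᶜ.Nonempty → (∀ x ∈ Y, (B x).Nonempty) →
      (∀ x ∈ Y, ∃ m < d, ∃ c : ℕ → X, c 0 = x ∧ c m ∉ Y ∧
        ∀ i, 1 ≤ i → i ≤ m → c i ∈ B (c (i - 1))) →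
      ∀ u : X → ℝ,
        BddAbove (Set.range u) →
        (∀ x ∈ Y, u x ≤ μ * sSup (Set.range u) + (1 - μ) * sInf (u '' B x) + Λ) →
        (∀ x ∉ Y, u x ≤ Λ) →
        sSup (Set.range u) ≤ C := by
  have hC : 0 < Λ / (μ * (1 - μ) ^ d) := by have := pow_pos (sub_pos.2 hμ1) d; positivity
  refine ⟨_, hC, ?_⟩
  intro X Y B _ _ _ hchain u _ hsub hout
  set M := sSup (Set.range u)
  rcases le_or_gt M 0 with hM | hM
  · exact hM.trans hC.le
  have hbound : ∀ x, u x ≤ chainBound μ Λ M d := by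
    intro x
    by_cases hx : x ∈ Y
    · obtain ⟨m, hmd, c, rfl, hcm, hc⟩ := hchain x hx
      have hc' : ∀ i < m, c (i + 1) ∈ B (c i) := fun i hi ↦ by
        simpa using hc (i + 1) (by omega) (by omega)
      exact (le_chainBound_of_chain hμ0 hμ1.le hΛ.le hM.le hsub hout m c hcm hc').trans
        (chainBound_mono hμ0.le hμ1.le hM.le hmd.le)
    · exact (hout x hx).trans (le_chainBound hμ0 hμ1.le hΛ.le hM.le d)
  refine le_div_of_le_chainBound hμ1 (Real.sSup_le ?_ ?_)
  · rintro _ ⟨x, rfl⟩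
    exact hbound x
  · exact hΛ.le.trans (le_chainBound hμ0 hμ1.le hΛ.le hM.le d)
end

section
/- In the admissible setup with finite diameter $d$, let $\mu \in (0,1)$, $\Lambda > 0$. If $u: X \to \mathbb{R}$ satisfies $\inf_X u > -\infty$, $u(x) \ge \mu \sup_{B(x)} u + (1-\mu)\inf_X u - \Lambda$ for all $x \in Y$, and $u(x) \ge -\Lambda$ for $x \in X \setminus Y$, then $\inf_X u \ge -C$ for a constant $C$ depending only on $\mu$, $\Lambda$, $d$. -/
/-!
Write `I = inf_X u` and pick `x₀` with `u x₀ < I + Λ`. Along a chain `x₀ = c 0, c 1, …, c m ∉ Y`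
with `c (i+1) ∈ B (c i)`, the supersolution inequality at `c i ∈ Y` turns `u (c i) ≤ I + s` into
`sup_{B (c i)} u ≤ I + (s + Λ) / μ`, so the excess of `u` over `I` grows at most like the recursion
`s₀ = Λ`, `s_{n+1} = (s_n + Λ) / μ`. At the exit point `u (c m) ≥ -Λ`, whence `-I ≤ Λ + s_m ≤ Λ + s_d`.
-/

noncomputable def supersolutionGrowth (μ Λ : ℝ) : ℕ → ℝ
  | 0 => Λ
  | n + 1 => (supersolutionGrowth μ Λ n + Λ) / μ

namespace supersolutionGrowth

variable {μ Λ : ℝ}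

theorem succ (n : ℕ) :
    supersolutionGrowth μ Λ (n + 1) = (supersolutionGrowth μ Λ n + Λ) / μ := rfl

theorem nonneg (hμ : 0 ≤ μ) (hΛ : 0 ≤ Λ) (n : ℕ) : 0 ≤ supersolutionGrowth μ Λ n := by
  induction n with
  | zero => exact hΛ
  | succ n ih => rw [succ]; positivity

theorem monotone (hμ0 : 0 < μ) (hμ1 : μ ≤ 1) (hΛ : 0 ≤ Λ) :
    Monotone (supersolutionGrowth μ Λ) := by
  refine monotone_nat_of_le_succ fun n => ?_
  have hs := nonneg hμ0.le hΛ n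
  calc supersolutionGrowth μ Λ n ≤ supersolutionGrowth μ Λ n + Λ := by linarith
    _ ≤ supersolutionGrowth μ Λ (n + 1) := le_div_self (by positivity) hμ0 hμ1

end supersolutionGrowth

section Chain

variable {X : Type*} {Y : Set X} {B : X → Set X} {u : X → ℝ} {μ Λ I : ℝ}

/-- The second alternative comes from the junk value `sSup = 0` when `u` is unbounded above
on `B x`. -/
theorem le_of_supersolution_step (hμ : 0 < μ)
    {x y : X} (hsuper : μ * sSup (u '' B x) + (1 - μ) * I - Λ ≤ u x) (hy : y ∈ B x)
    {s : ℝ} (hx : u x ≤ I + s) :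
    u y ≤ I + (s + Λ) / μ ∨ -I ≤ (s + Λ) / μ := by
  by_cases hbdd : BddAbove (u '' B x)
  · left
    have hSup : μ * sSup (u '' B x) ≤ μ * I + (s + Λ) := by linarith
    calc u y ≤ sSup (u '' B x) := le_csSup hbdd ⟨y, hy, rfl⟩
      _ ≤ I + (s + Λ) / μ := by
        rw [← sub_le_iff_le_add', le_div_iff₀ hμ]
        linarith
  · right
    rw [Real.sSup_of_not_bddAbove hbdd, mul_zero, zero_add] at hsuper
    rw [le_div_iff₀ hμ]
    linarith

theorem neg_le_of_supersolution_chain (hμ0 : 0 < μ) (hμ1 : μ ≤ 1) (hΛ : 0 ≤ Λ)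
    (hsuper : ∀ x ∈ Y, μ * sSup (u '' B x) + (1 - μ) * I - Λ ≤ u x)
    (hout : ∀ x ∉ Y, -Λ ≤ u x)
    {m : ℕ} {c : ℕ → X} (hc : ∀ i < m, c (i + 1) ∈ B (c i)) (hcm : c m ∉ Y)
    (hc0 : u (c 0) ≤ I + Λ) :
    -I ≤ Λ + supersolutionGrowth μ Λ m := by
  set s := supersolutionGrowth μ Λ
  have hmono := supersolutionGrowth.monotone hμ0 hμ1 hΛ
  have exit_bound : ∀ i, c i ∉ Y → u (c i) ≤ I + s i → -I ≤ Λ + s i := fun i hi hu => by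
    linarith [hout _ hi]
  have excess_bound : ∀ i ≤ m, -I ≤ Λ + s i ∨ u (c i) ≤ I + s i := by
    intro i
    induction i with
    | zero => exact fun _ => Or.inr hc0
    | succ n ih =>
      intro hn
      have hs : s n ≤ s (n + 1) := hmono n.le_succ
      rcases ih (by omega) with hI | hu
      · exact Or.inl (by linarith)
      by_cases hY : c n ∈ Y
      · rcases le_of_supersolution_step hμ0 (hsuper _ hY) (hc n hn) hu with h | h
        · exact Or.inr h
        · exact Or.inl (by change -I ≤ Λ + (s n + Λ) / μ; linarith)
      · exact Or.inl (by linarith [exit_bound n hY hu])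
  rcases excess_bound m le_rfl with h | h
  · exact h
  · exact exit_bound m hcm h

end Chain

theorem exists_chain_to_compl {X : Type*} {Y : Set X} {B : X → Set X} {d : ℕ}
    (hchain : ∀ x ∈ Y, ∃ m < d, ∃ c : ℕ → X, c 0 = x ∧ c m ∉ Y ∧
      ∀ i, 1 ≤ i → i ≤ m → c i ∈ B (c (i - 1)))
    (x : X) :
    ∃ m ≤ d, ∃ c : ℕ → X, c 0 = x ∧ c m ∉ Y ∧ ∀ i < m, c (i + 1) ∈ B (c i) := by
  by_cases hx : x ∈ Y
  · obtain ⟨m, hm, c, hc0, hcm, hc⟩ := hchain x hx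
    exact ⟨m, hm.le, c, hc0, hcm, fun i hi => hc (i + 1) (by omega) hi⟩
  · exact ⟨0, d.zero_le, fun _ => x, rfl, hx, fun i hi => absurd hi i.not_lt_zero⟩

/-- Boundedness of supersolutions (Theorem 3.1(iii)): in an admissible setup of
"diameter" `d`, any `u` with `inf_X u > -∞` satisfying
`u(x) ≥ μ sup_{B(x)} u + (1-μ) inf_X u - Λ` on `Y` and `u ≥ -Λ` off `Y`
satisfies `inf_X u ≥ -C` for a constant `C = C(μ,Λ,d)`. -/
theorem boundedness_supersolution (μ Λ : ℝ) (hμ0 : 0 < μ) (hμ1 : μ < 1) (hΛ : 0 < Λ)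
    (d : ℕ) :
    ∃ C : ℝ, 0 < C ∧ ∀ (X : Type) (Y : Set X) (B : X → Set X),
      Y.Nonempty → Yᶜ.Nonempty → (∀ x ∈ Y, (B x).Nonempty) →
      (∀ x ∈ Y, ∃ m < d, ∃ c : ℕ → X, c 0 = x ∧ c m ∉ Y ∧
        ∀ i, 1 ≤ i → i ≤ m → c i ∈ B (c (i - 1))) →
      ∀ u : X → ℝ,
        BddBelow (Set.range u) →
        (∀ x ∈ Y, μ * sSup (u '' B x) + (1 - μ) * sInf (Set.range u) - Λ ≤ u x) →
        (∀ x ∉ Y, -Λ ≤ u x) →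
        -C ≤ sInf (Set.range u) := by
  have hgrowth := supersolutionGrowth.nonneg hμ0.le hΛ.le d
  refine ⟨Λ + supersolutionGrowth μ Λ d, by positivity, ?_⟩
  intro X Y B ⟨y, _⟩ _ _ hchain u _ hsuper hout
  have : Nonempty X := ⟨y⟩
  obtain ⟨_, ⟨x₀, rfl⟩, hx₀⟩ := exists_lt_of_csInf_lt (Set.range_nonempty u)
    (lt_add_of_pos_right (sInf (Set.range u)) hΛ)
  obtain ⟨m, hmd, c, hc0, hcm, hc⟩ := exists_chain_to_compl hchain x₀
  have hm := neg_le_of_supersolution_chain hμ0 hμ1.le hΛ.le hsuper hout hc hcm (hc0 ▸ hx₀.le)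
  have hmono := supersolutionGrowth.monotone hμ0 hμ1.le hΛ.le hmd
  linarith
end

section
/- Define $u_0: \mathbb{R} \to \mathbb{R}$ by $u_0 = 0$ on $(-\infty,0]$, $u_0 = 4$ on $(0,1)$, $u_0(1) = 6$, $u_0 = 8$ on $(1,2)$, $u_0 = 12$ on $[2,\infty)$. Then for every $x \in (0,2)$, $u_0(x) = \tfrac{1}{2}\sup_{(x-1,x+1)} u_0 + \tfrac{1}{2}\inf_{(x-1,x+1)} u_0$, so $u_0$ is a discontinuous solution of the tug-of-war DPP with $f \equiv 0$ on $Y = (0,2)$, $\mu = 1/2$, $\varepsilon = 1$. -/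
/-! On each `(x - 1, x + 1)` with `x ∈ (0, 2)` both the supremum and the infimum of `u₀` are
attained, at points of the neighbouring steps, and the step values `0, 4, 6, 8, 12` are chosen so
that the value at `x` is the average of the two. A continuous function could not jump from `0` to
`6` on `[0, 1]` without taking the value `2`. -/

/-- The function of Example 1.1 (case `f ≡ 0`): `0` on `(-∞,0]`, `4` on `(0,1)`,
`6` at `1`, `8` on `(1,2)`, `12` on `[2,∞)`. -/
noncomputable def u₀ (x : ℝ) : ℝ :=
  if x ≤ 0 then 0
  else if x < 1 then 4
  else if x = 1 then 6
  else if x < 2 then 8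
  else 12

open Set

theorem midrange_image_eq {α : Type*} {f : α → ℝ} {s : Set α} {p q : α} {a b : ℝ}
    (hp : p ∈ s) (hfp : f p = a) (hmax : ∀ t ∈ s, f t ≤ a)
    (hq : q ∈ s) (hfq : f q = b) (hmin : ∀ t ∈ s, b ≤ f t) :
    (1 / 2) * sSup (f '' s) + (1 / 2) * sInf (f '' s) = (a + b) / 2 := by
  have hsup : IsGreatest (f '' s) a := ⟨⟨p, hp, hfp⟩, forall_mem_image.2 hmax⟩
  have hinf : IsLeast (f '' s) b := ⟨⟨q, hq, hfq⟩, forall_mem_image.2 hmin⟩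
  rw [hsup.csSup_eq, hinf.csInf_eq]
  ring

section Values

variable {x : ℝ}

theorem u₀_of_nonpos (h : x ≤ 0) : u₀ x = 0 := by
  simp [u₀, h]

theorem u₀_of_pos_of_lt_one (h0 : 0 < x) (h1 : x < 1) : u₀ x = 4 := by
  simp [u₀, h0.not_ge, h1]

theorem u₀_one : u₀ 1 = 6 := by
  norm_num [u₀]

theorem u₀_of_one_lt_of_lt_two (h1 : 1 < x) (h2 : x < 2) : u₀ x = 8 := by
  simp [u₀, (zero_lt_one.trans h1).not_ge, h1.not_gt, h1.ne', h2]

theorem u₀_of_two_le (h : 2 ≤ x) : u₀ x = 12 := by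
  unfold u₀
  split_ifs <;> linarith

theorem u₀_nonneg (x : ℝ) : 0 ≤ u₀ x := by
  unfold u₀
  split_ifs <;> norm_num

theorem u₀_le_twelve (x : ℝ) : u₀ x ≤ 12 := by
  unfold u₀
  split_ifs <;> norm_num

theorem four_le_u₀ (h : 0 < x) : 4 ≤ u₀ x := by
  unfold u₀
  split_ifs <;> linarith

theorem u₀_le_eight (h : x < 2) : u₀ x ≤ 8 := by
  unfold u₀
  split_ifs <;> linarith

theorem u₀_ne_two (x : ℝ) : u₀ x ≠ 2 := by
  unfold u₀
  split_ifs <;> norm_num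

end Values

theorem u₀_eq_midrange {x : ℝ} (hx0 : 0 < x) (hx2 : x < 2) :
    u₀ x = (1 / 2) * sSup (u₀ '' Ioo (x - 1) (x + 1)) +
      (1 / 2) * sInf (u₀ '' Ioo (x - 1) (x + 1)) := by
  rcases lt_trichotomy x 1 with hx1 | rfl | hx1
  · rw [u₀_of_pos_of_lt_one hx0 hx1,
      midrange_image_eq (s := Ioo (x - 1) (x + 1)) (p := (x + 2) / 2) ⟨by linarith, by linarith⟩
        (u₀_of_one_lt_of_lt_two (by linarith) (by linarith))
        (fun t ht => u₀_le_eight (by linarith [ht.2]))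
        (q := (x - 1) / 2) ⟨by linarith, by linarith⟩ (u₀_of_nonpos (by linarith))
        (fun t _ => u₀_nonneg t)]
    norm_num
  · rw [u₀_one,
      midrange_image_eq (s := Ioo ((1 : ℝ) - 1) (1 + 1)) (p := 3 / 2) ⟨by norm_num, by norm_num⟩
        (u₀_of_one_lt_of_lt_two (by norm_num) (by norm_num))
        (fun t ht => u₀_le_eight (by linarith [ht.2]))
        (q := 1 / 2) ⟨by norm_num, by norm_num⟩ (u₀_of_pos_of_lt_one (by norm_num) (by norm_num))
        (fun t ht => four_le_u₀ (by linarith [ht.1]))]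
    norm_num
  · rw [u₀_of_one_lt_of_lt_two hx1 hx2,
      midrange_image_eq (s := Ioo (x - 1) (x + 1)) (p := (x + 3) / 2) ⟨by linarith, by linarith⟩
        (u₀_of_two_le (by linarith)) (fun t _ => u₀_le_twelve t)
        (q := x / 2) ⟨by linarith, by linarith⟩
        (u₀_of_pos_of_lt_one (by linarith) (by linarith))
        (fun t ht => four_le_u₀ (by linarith [ht.1]))]
    norm_num

theorem not_continuous_u₀ : ¬ Continuous u₀ := fun hc => by
  have h2 : (2 : ℝ) ∈ Icc (u₀ 0) (u₀ 1) := by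
    rw [u₀_of_nonpos le_rfl, u₀_one]
    norm_num
  obtain ⟨t, -, ht⟩ := intermediate_value_Icc zero_le_one hc.continuousOn h2
  exact u₀_ne_two t ht

/-- `u₀` is a discontinuous solution of the tug-of-war DPP with `f ≡ 0`,
`Y = (0,2)`, `μ = 1/2`, `ε = 1`:
`u₀(x) = ½ sup_{(x-1,x+1)} u₀ + ½ inf_{(x-1,x+1)} u₀` for all `x ∈ (0,2)`. -/
theorem u₀_solves_dpp :
    (∀ x ∈ Set.Ioo (0 : ℝ) 2,
      u₀ x = (1 / 2) * sSup (u₀ '' Set.Ioo (x - 1) (x + 1)) +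
        (1 / 2) * sInf (u₀ '' Set.Ioo (x - 1) (x + 1))) ∧
    ¬ Continuous u₀ :=
  ⟨fun _ hx => u₀_eq_midrange hx.1 hx.2, not_continuous_u₀⟩
end

section
/- Suppose the DPP iteration converges uniformly to a solution $u$ from any bounded initial function. Let $\underline{v}$ be a bounded subsolution and $\bar{v}$ a bounded supersolution (with the same boundary data $F$ and running cost $f$, $\inf_Y f > 0$, $\sup|F| + \sup|f| < \infty$). Then $\underline{v}(x) \le \bar{v}(x)$ for every $x \in X$. -/
/-!
The DPP operator `T` is monotone on bounded functions and preserves boundedness. A subsolution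
satisfies `v ≤ T v`, hence `v ≤ T^[k] v` for every `k`; these iterates converge to `u`, so `v ≤ u`.
Symmetrically every supersolution lies above `u`.
-/

open Set Filter Topology

section ConditionallyCompleteLattice

variable {ι α : Type*} [ConditionallyCompleteLattice α] {s : Set ι} {v w : ι → α}

theorem csSup_image_mono (hw : BddAbove (w '' s)) (hvw : ∀ x ∈ s, v x ≤ w x) :
    sSup (v '' s) ≤ sSup (w '' s) := by
  rw [sSup_image', sSup_image']
  exact ciSup_mono (by rwa [← image_eq_range]) fun x => hvw x x.2

theorem csInf_image_mono (hv : BddBelow (v '' s)) (hvw : ∀ x ∈ s, v x ≤ w x) :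
    sInf (v '' s) ≤ sInf (w '' s) := by
  rw [sInf_image', sInf_image']
  exact ciInf_mono (by rwa [← image_eq_range]) fun x => hvw x x.2

end ConditionallyCompleteLattice

namespace Real

variable {ι : Type*} {v : ι → ℝ} {M : ℝ}

theorem bddAbove_range_of_abs_le (hM : ∀ x, |v x| ≤ M) : BddAbove (range v) :=
  ⟨M, forall_mem_range.2 fun x => le_of_abs_le (hM x)⟩

theorem bddBelow_range_of_abs_le (hM : ∀ x, |v x| ≤ M) : BddBelow (range v) :=
  ⟨-M, forall_mem_range.2 fun x => neg_le_of_abs_le (hM x)⟩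

theorem neg_le_sInf_image (hM : ∀ x, |v x| ≤ M) (hM0 : 0 ≤ M) (s : Set ι) :
    -M ≤ sInf (v '' s) :=
  Real.le_sInf (forall_mem_image.2 fun x _ => neg_le_of_abs_le (hM x)) (neg_nonpos.2 hM0)

theorem sSup_image_le (hM : ∀ x, |v x| ≤ M) (hM0 : 0 ≤ M) (s : Set ι) : sSup (v '' s) ≤ M :=
  Real.sSup_le (forall_mem_image.2 fun x _ => le_of_abs_le (hM x)) hM0

theorem sInf_image_le_sSup_image (hM : ∀ x, |v x| ≤ M) (s : Set ι) :
    sInf (v '' s) ≤ sSup (v '' s) :=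
  Real.sInf_le_sSup _ ((bddBelow_range_of_abs_le hM).mono (image_subset_range v s))
    ((bddAbove_range_of_abs_le hM).mono (image_subset_range v s))

end Real

open Classical in
noncomputable def dppOperator {X : Type*} (Y : Set X) (B : X → Set X) (μ : ℝ) (f F : X → ℝ)
    (v : X → ℝ) : X → ℝ :=
  fun x => if x ∈ Y then μ * sSup (v '' B x) + (1 - μ) * sInf (v '' B x) + f x else F x

namespace dppOperator

variable {X : Type*} {Y : Set X} {B : X → Set X} {μ : ℝ} {f F v w : X → ℝ} {x : X}

theorem apply_of_mem (hx : x ∈ Y) :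
    dppOperator Y B μ f F v x = μ * sSup (v '' B x) + (1 - μ) * sInf (v '' B x) + f x :=
  if_pos hx

theorem apply_of_notMem (hx : x ∉ Y) : dppOperator Y B μ f F v x = F x :=
  if_neg hx

theorem le_self_of_subsolution
    (hsub : ∀ x ∈ Y, v x ≤ μ * sSup (v '' B x) + (1 - μ) * sInf (v '' B x) + f x)
    (hF : ∀ x ∉ Y, v x ≤ F x) : v ≤ dppOperator Y B μ f F v := by
  intro x
  by_cases hx : x ∈ Y
  · rw [apply_of_mem hx]; exact hsub x hx
  · rw [apply_of_notMem hx]; exact hF x hx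

theorem self_le_of_supersolution
    (hsuper : ∀ x ∈ Y, μ * sSup (v '' B x) + (1 - μ) * sInf (v '' B x) + f x ≤ v x)
    (hF : ∀ x ∉ Y, F x ≤ v x) : dppOperator Y B μ f F v ≤ v := by
  intro x
  by_cases hx : x ∈ Y
  · rw [apply_of_mem hx]; exact hsuper x hx
  · rw [apply_of_notMem hx]; exact hF x hx

theorem mono (hμ0 : 0 ≤ μ) (hμ1 : μ ≤ 1) (hv : BddBelow (range v)) (hw : BddAbove (range w))
    (hvw : v ≤ w) : dppOperator Y B μ f F v ≤ dppOperator Y B μ f F w := by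
  intro x
  by_cases hx : x ∈ Y
  · rw [apply_of_mem hx, apply_of_mem hx]
    have hsup := csSup_image_mono (hw.mono (image_subset_range w (B x))) fun y _ => hvw y
    have hinf := csInf_image_mono (hv.mono (image_subset_range v (B x))) fun y _ => hvw y
    have hμ1' : 0 ≤ 1 - μ := sub_nonneg.2 hμ1
    gcongr
  · rw [apply_of_notMem hx, apply_of_notMem hx]

theorem bounded (hμ0 : 0 ≤ μ) (hμ1 : μ ≤ 1) (hf : ∃ M, ∀ x, |f x| ≤ M)
    (hF : ∃ M, ∀ x, |F x| ≤ M) (hv : ∃ M, ∀ x, |v x| ≤ M) :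
    ∃ M, ∀ x, |dppOperator Y B μ f F v x| ≤ M := by
  obtain ⟨Mf, hMf⟩ := hf
  obtain ⟨MF, hMF⟩ := hF
  obtain ⟨M, hM⟩ := hv
  refine ⟨max (M + Mf) MF, fun x => ?_⟩
  by_cases hx : x ∈ Y
  · rw [apply_of_mem hx]
    have hM0 : 0 ≤ M := (abs_nonneg _).trans (hM x)
    have hsup := Real.sSup_image_le hM hM0 (B x)
    have hinf := Real.neg_le_sInf_image hM hM0 (B x)
    have hle := Real.sInf_image_le_sSup_image hM (B x)
    have hfx := abs_le.1 (hMf x)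
    refine (abs_le.2 ⟨?_, ?_⟩).trans (le_max_left _ _) <;> nlinarith
  · rw [apply_of_notMem hx]
    exact (hMF x).trans (le_max_right _ _)

theorem iterate_bounded (hμ0 : 0 ≤ μ) (hμ1 : μ ≤ 1) (hf : ∃ M, ∀ x, |f x| ≤ M)
    (hF : ∃ M, ∀ x, |F x| ≤ M) (hv : ∃ M, ∀ x, |v x| ≤ M) :
    ∀ k, ∃ M, ∀ x, |(dppOperator Y B μ f F)^[k] v x| ≤ M
  | 0 => hv
  | k + 1 => by
    rw [Function.iterate_succ_apply']
    exact bounded hμ0 hμ1 hf hF (iterate_bounded hμ0 hμ1 hf hF hv k)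

theorem le_iterate (hμ0 : 0 ≤ μ) (hμ1 : μ ≤ 1) (hf : ∃ M, ∀ x, |f x| ≤ M)
    (hF : ∃ M, ∀ x, |F x| ≤ M) (hv : ∃ M, ∀ x, |v x| ≤ M) (hsub : v ≤ dppOperator Y B μ f F v) :
    ∀ k, v ≤ (dppOperator Y B μ f F)^[k] v
  | 0 => le_rfl
  | k + 1 => by
    rw [Function.iterate_succ_apply']
    have ⟨M, hM⟩ := hv
    obtain ⟨Mk, hMk⟩ := iterate_bounded hμ0 hμ1 hf hF hv k
    exact hsub.trans <| mono hμ0 hμ1 (Real.bddBelow_range_of_abs_le hM)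
      (Real.bddAbove_range_of_abs_le hMk) (le_iterate hμ0 hμ1 hf hF hv hsub k)

theorem iterate_le (hμ0 : 0 ≤ μ) (hμ1 : μ ≤ 1) (hf : ∃ M, ∀ x, |f x| ≤ M)
    (hF : ∃ M, ∀ x, |F x| ≤ M) (hv : ∃ M, ∀ x, |v x| ≤ M) (hsup : dppOperator Y B μ f F v ≤ v) :
    ∀ k, (dppOperator Y B μ f F)^[k] v ≤ v
  | 0 => le_rfl
  | k + 1 => by
    rw [Function.iterate_succ_apply']
    have ⟨M, hM⟩ := hv
    obtain ⟨Mk, hMk⟩ := iterate_bounded hμ0 hμ1 hf hF hv k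
    exact (mono hμ0 hμ1 (Real.bddBelow_range_of_abs_le hMk)
      (Real.bddAbove_range_of_abs_le hM) (iterate_le hμ0 hμ1 hf hF hv hsup k)).trans hsup

end dppOperator

theorem dpp_comparison_general (X : Type) (Y : Set X) (B : X → Set X) (μ : ℝ)
    (hμ0 : 0 < μ) (hμ1 : μ < 1)
    (f F : X → ℝ)
    (hF : ∃ M, ∀ x, |F x| ≤ M) (hf : ∃ M, ∀ x, |f x| ≤ M)
    -- the iteration converges uniformly to a fixed limit from any bounded start:
    (hconv : ∃ u : X → ℝ, ∀ v : ℕ → X → ℝ,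
      (∃ M, ∀ x, |v 0 x| ≤ M) →
      (∀ k, ∀ x ∈ Y,
        v (k + 1) x = μ * sSup (v k '' B x) + (1 - μ) * sInf (v k '' B x) + f x) →
      (∀ k, ∀ x ∉ Y, v (k + 1) x = F x) →
      TendstoUniformly (fun k => v k) u Filter.atTop)
    -- a bounded subsolution:
    (vlow : X → ℝ) (hvlowbd : ∃ M, ∀ x, |vlow x| ≤ M)
    (hvlowsub : ∀ x ∈ Y,
      vlow x ≤ μ * sSup (vlow '' B x) + (1 - μ) * sInf (vlow '' B x) + f x)
    (hvlowF : ∀ x ∉ Y, vlow x = F x)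
    -- a bounded supersolution:
    (vup : X → ℝ) (hvupbd : ∃ M, ∀ x, |vup x| ≤ M)
    (hvupsuper : ∀ x ∈ Y,
      μ * sSup (vup '' B x) + (1 - μ) * sInf (vup '' B x) + f x ≤ vup x)
    (hvupF : ∀ x ∉ Y, vup x = F x) :
    ∀ x, vlow x ≤ vup x := by
  obtain ⟨u, hu⟩ := hconv
  set T := dppOperator Y B μ f F
  have iterates_tendsto (v : X → ℝ) (hv : ∃ M, ∀ x, |v x| ≤ M) (x : X) :
      Tendsto (fun k => T^[k] v x) atTop (𝓝 (u x)) :=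
    (hu (fun k => T^[k] v) hv
      (fun k y hy => by rw [Function.iterate_succ_apply']; exact dppOperator.apply_of_mem hy)
      (fun k y hy => by rw [Function.iterate_succ_apply']; exact dppOperator.apply_of_notMem hy)
      ).tendsto_at x
  have hlow : ∀ k, vlow ≤ T^[k] vlow :=
    dppOperator.le_iterate hμ0.le hμ1.le hf hF hvlowbd
      (dppOperator.le_self_of_subsolution hvlowsub fun x hx => (hvlowF x hx).le)
  have hup : ∀ k, T^[k] vup ≤ vup :=
    dppOperator.iterate_le hμ0.le hμ1.le hf hF hvupbd
      (dppOperator.self_le_of_supersolution hvupsuper fun x hx => (hvupF x hx).ge)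
  intro x
  calc vlow x ≤ u x := ge_of_tendsto' (iterates_tendsto vlow hvlowbd x) fun k => hlow k x
    _ ≤ vup x := le_of_tendsto' (iterates_tendsto vup hvupbd x) fun k => hup k x

/-- Comparison principle (Corollary 1.2): if the DPP iteration converges
uniformly to one and the same solution from every bounded starting function,
then every bounded subsolution lies below every bounded supersolution. -/
theorem dpp_comparison (X : Type) (Y : Set X) (B : X → Set X) (μ : ℝ)
    (hμ0 : 0 < μ) (hμ1 : μ < 1) (d : ℕ)
    (hY : Y.Nonempty) (hYc : Yᶜ.Nonempty) (hB : ∀ x ∈ Y, (B x).Nonempty)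
    (hchain : ∀ x ∈ Y, ∃ m < d, ∃ c : ℕ → X, c 0 = x ∧ c m ∉ Y ∧
      ∀ i, 1 ≤ i → i ≤ m → c i ∈ B (c (i - 1)))
    (f F : X → ℝ)
    (hF : ∃ M, ∀ x, |F x| ≤ M) (hf : ∃ M, ∀ x, |f x| ≤ M)
    (hfpos : ∃ lam > (0 : ℝ), ∀ x ∈ Y, lam ≤ f x)
    -- the iteration converges uniformly to a fixed limit from any bounded start:
    (hconv : ∃ u : X → ℝ, ∀ v : ℕ → X → ℝ,
      (∃ M, ∀ x, |v 0 x| ≤ M) →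
      (∀ k, ∀ x ∈ Y,
        v (k + 1) x = μ * sSup (v k '' B x) + (1 - μ) * sInf (v k '' B x) + f x) →
      (∀ k, ∀ x ∉ Y, v (k + 1) x = F x) →
      TendstoUniformly (fun k => v k) u Filter.atTop)
    -- a bounded subsolution:
    (vlow : X → ℝ) (hvlowbd : ∃ M, ∀ x, |vlow x| ≤ M)
    (hvlowsub : ∀ x ∈ Y,
      vlow x ≤ μ * sSup (vlow '' B x) + (1 - μ) * sInf (vlow '' B x) + f x)
    (hvlowF : ∀ x ∉ Y, vlow x = F x)
    -- a bounded supersolution: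
    (vup : X → ℝ) (hvupbd : ∃ M, ∀ x, |vup x| ≤ M)
    (hvupsuper : ∀ x ∈ Y,
      μ * sSup (vup '' B x) + (1 - μ) * sInf (vup '' B x) + f x ≤ vup x)
    (hvupF : ∀ x ∉ Y, vup x = F x) :
    ∀ x, vlow x ≤ vup x :=
  dpp_comparison_general X Y B μ hμ0 hμ1 f F hF hf hconv vlow hvlowbd hvlowsub hvlowF vup hvupbd
    hvupsuper hvupF
end

section
/- Let $(X,d)$ be a metric space of finite diameter, $Y \subsetneq X$ nonempty and proper, $\varepsilon > 0$, and suppose every $x \in Y$ is connected to $X\setminus Y$ by a chain of at most $N$ steps of size less than $\varepsilon$ (e.g., $N \ge \mathrm{diam}(X)/\varepsilon + 2$ when such chains exist). Let $\mu \in (0,1)$, $f: Y\to\mathbb{R}$, $F: X\setminus Y\to\mathbb{R}$ with $\sup|F| + \sup|f| < \infty$ and $\inf_Y f > 0$. Then any two bounded functions $u, \tilde u: X\to\mathbb{R}$ both satisfying $u(x) = \mu\sup_{B_\varepsilon(x)} u + (1-\mu)\inf_{B_\varepsilon(x)} u + f(x)$ on $Y$ and $u = F$ on $X\setminus Y$ coincide: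 $u = \tilde u$. -/
/-!
Comparison by a multiplicative perturbation. If `u` is a subsolution and `v` a supersolution
with `u ≤ v` off `Y`, then for `t ∈ [0, 1)` the function `t u - v` satisfies, at every point of
`Y`, `t u - v ≤ sup (t u - v) - (1 - t) inf_Y f`, because the operator
`μ sup_{B_ε} + (1 - μ) inf_{B_ε}` is positively homogeneous and monotone. Since `inf_Y f > 0`,
the supremum of `t u - v` cannot be approached inside `Y`, so it is bounded by its values off `Y`,
which are `O(1 - t)`. Letting `t → 1` gives `u ≤ v`, and by symmetry `u = v`.
-/

open Set Filter Topology
open scoped Pointwise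

section SupInfImage

variable {α : Type*} {s : Set α} {g h : α → ℝ} {c : ℝ}

lemma sSup_image_sub_sSup_image_le (hs : s.Nonempty) (hh : BddAbove (h '' s))
    (hgh : ∀ y ∈ s, g y - h y ≤ c) : sSup (g '' s) - sSup (h '' s) ≤ c := by
  suffices sSup (g '' s) ≤ c + sSup (h '' s) by linarith
  refine csSup_le (hs.image g) ?_
  rintro _ ⟨y, hy, rfl⟩
  linarith [hgh y hy, le_csSup hh (mem_image_of_mem h hy)]

lemma sInf_image_sub_sInf_image_le (hs : s.Nonempty) (hg : BddBelow (g '' s))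
    (hgh : ∀ y ∈ s, g y - h y ≤ c) : sInf (g '' s) - sInf (h '' s) ≤ c := by
  suffices sInf (g '' s) - c ≤ sInf (h '' s) by linarith
  refine le_csInf (hs.image h) ?_
  rintro _ ⟨y, hy, rfl⟩
  linarith [hgh y hy, csInf_le hg (mem_image_of_mem g hy)]

lemma image_const_mul (t : ℝ) (u : α → ℝ) :
    (fun y => t * u y) '' s = t • (u '' s) := by
  rw [← Set.image_smul, Set.image_image]
  rfl

end SupInfImage

lemma forall_le_of_le_ciSup_sub {α : Type*} (Y : Set α) {w : α → ℝ} (hw : BddAbove (range w))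
    {δ B : ℝ} (hδ : 0 < δ) (hY : ∀ x ∈ Y, w x ≤ (⨆ y, w y) - δ) (hYc : ∀ x ∉ Y, w x ≤ B)
    (x : α) : w x ≤ B := by
  have : Nonempty α := ⟨x⟩
  have hsup : ⨆ y, w y ≤ max ((⨆ y, w y) - δ) B := by
    refine ciSup_le fun y => ?_
    by_cases hy : y ∈ Y
    · exact le_max_of_le_left (hY y hy)
    · exact le_max_of_le_right (hYc y hy)
  have hB : ⨆ y, w y ≤ B := by
    rcases le_max_iff.1 hsup with h | h
    · linarith
    · exact h
  exact (le_ciSup hw x).trans hB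

namespace TugOfWar

variable {X : Type*} [PseudoMetricSpace X] {ε μ : ℝ}

noncomputable def avg (ε μ : ℝ) (u : X → ℝ) (x : X) : ℝ :=
  μ * sSup (u '' Metric.ball x ε) + (1 - μ) * sInf (u '' Metric.ball x ε)

lemma avg_const_mul {t : ℝ} (ht : 0 ≤ t) (u : X → ℝ) (x : X) :
    avg ε μ (fun y => t * u y) x = t * avg ε μ u x := by
  simp only [avg, image_const_mul, Real.sSup_smul_of_nonneg ht, Real.sInf_smul_of_nonneg ht,
    smul_eq_mul]
  ring

lemma avg_sub_avg_le (hε : 0 < ε) (hμ0 : 0 ≤ μ) (hμ1 : μ ≤ 1) {g h : X → ℝ} {c : ℝ}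
    (hg : BddBelow (range g)) (hh : BddAbove (range h)) (hgh : ∀ y, g y - h y ≤ c) (x : X) :
    avg ε μ g x - avg ε μ h x ≤ c := by
  have hball : (Metric.ball x ε).Nonempty := Metric.nonempty_ball.2 hε
  have hsup := sSup_image_sub_sSup_image_le hball (hh.mono (image_subset_range _ _))
    fun y _ => hgh y
  have hinf := sInf_image_sub_sInf_image_le hball (hg.mono (image_subset_range _ _))
    fun y _ => hgh y
  calc avg ε μ g x - avg ε μ h x
      = μ * (sSup (g '' Metric.ball x ε) - sSup (h '' Metric.ball x ε)) +
          (1 - μ) * (sInf (g '' Metric.ball x ε) - sInf (h '' Metric.ball x ε)) := by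
        unfold avg; ring
    _ ≤ μ * c + (1 - μ) * c := by gcongr
    _ = c := by ring

lemma mul_sub_le_of_subsolution (hε : 0 < ε) (hμ0 : 0 ≤ μ) (hμ1 : μ ≤ 1) {Y : Set X}
    {f u v : X → ℝ} {lam : ℝ} (hlam : 0 < lam) (hf : ∀ x ∈ Y, lam ≤ f x)
    (hu : Bornology.IsBounded (range u)) (hv : Bornology.IsBounded (range v))
    (hsub : ∀ x ∈ Y, u x ≤ avg ε μ u x + f x) (hsuper : ∀ x ∈ Y, avg ε μ v x + f x ≤ v x)
    (hYc : ∀ x ∉ Y, u x ≤ v x) {K : ℝ} (hK : ∀ x, -K ≤ v x) {t : ℝ} (ht0 : 0 ≤ t) (ht1 : t < 1)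
    (x : X) : t * u x - v x ≤ (1 - t) * K := by
  obtain ⟨Mu, hMu⟩ := hu.bddAbove
  obtain ⟨mu, hmu⟩ := hu.bddBelow
  have htu : BddBelow (range fun y => t * u y) :=
    ⟨t * mu, forall_mem_range.2 fun y => mul_le_mul_of_nonneg_left (hmu ⟨y, rfl⟩) ht0⟩
  have hw : BddAbove (range fun y => t * u y - v y) := by
    refine ⟨t * Mu + K, forall_mem_range.2 fun y => ?_⟩
    linarith [mul_le_mul_of_nonneg_left (hMu ⟨y, rfl⟩) ht0, hK y]
  have h1t : 0 ≤ 1 - t := by linarith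
  refine forall_le_of_le_ciSup_sub Y hw (δ := (1 - t) * lam) (mul_pos (by linarith) hlam)
    (fun z hz => ?_) (fun z hz => ?_) x
  · have hcomp := avg_sub_avg_le hε hμ0 hμ1 htu hv.bddAbove (le_ciSup hw) z
    rw [avg_const_mul ht0] at hcomp
    linarith [mul_le_mul_of_nonneg_left (hsub z hz) ht0, hsuper z hz,
      mul_le_mul_of_nonneg_left (hf z hz) h1t]
  · linarith [mul_le_mul_of_nonneg_left (hYc z hz) ht0, mul_le_mul_of_nonneg_left (hK z) h1t]

theorem le_of_subsolution_of_supersolution (hε : 0 < ε) (hμ0 : 0 ≤ μ) (hμ1 : μ ≤ 1)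
    {Y : Set X} {f u v : X → ℝ} {lam : ℝ} (hlam : 0 < lam) (hf : ∀ x ∈ Y, lam ≤ f x)
    (hu : Bornology.IsBounded (range u)) (hv : Bornology.IsBounded (range v))
    (hsub : ∀ x ∈ Y, u x ≤ avg ε μ u x + f x) (hsuper : ∀ x ∈ Y, avg ε μ v x + f x ≤ v x)
    (hYc : ∀ x ∉ Y, u x ≤ v x) : u ≤ v := by
  intro x
  obtain ⟨m, hm⟩ := hv.bddBelow
  have hlim : Tendsto (fun t => t * u x - v x - (1 - t) * -m) (𝓝[<] 1) (𝓝 (u x - v x)) := by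
    have hcont : Continuous fun t : ℝ => t * u x - v x - (1 - t) * -m := by fun_prop
    simpa using (hcont.tendsto 1).mono_left nhdsWithin_le_nhds
  have hle := le_of_tendsto hlim <| eventually_of_mem (Ioo_mem_nhdsLT zero_lt_one) fun t ht =>
    sub_nonpos.2 <| mul_sub_le_of_subsolution hε hμ0 hμ1 hlam hf hu hv hsub hsuper hYc
      (K := -m) (fun y => by simpa using hm ⟨y, rfl⟩) ht.1.le ht.2 x
  linarith

end TugOfWar

theorem metric_dpp_uniqueness_general {X : Type} [MetricSpace X]
    (Y : Set X)
    (ε : ℝ) (hε : 0 < ε)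
    (μ : ℝ) (hμ0 : 0 < μ) (hμ1 : μ < 1)
    (f F : X → ℝ)
    (hfpos : ∃ lam > (0 : ℝ), ∀ x ∈ Y, lam ≤ f x)
    (u v : X → ℝ)
    (hubd : ∃ M, ∀ x, |u x| ≤ M) (hvbd : ∃ M, ∀ x, |v x| ≤ M)
    (hu : ∀ x ∈ Y, u x = μ * sSup (u '' Metric.ball x ε) +
      (1 - μ) * sInf (u '' Metric.ball x ε) + f x)
    (huF : ∀ x ∉ Y, u x = F x)
    (hv : ∀ x ∈ Y, v x = μ * sSup (v '' Metric.ball x ε) +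
      (1 - μ) * sInf (v '' Metric.ball x ε) + f x)
    (hvF : ∀ x ∉ Y, v x = F x) :
    u = v := by
  obtain ⟨lam, hlam, hf⟩ := hfpos
  have hbdd : ∀ w : X → ℝ, (∃ M, ∀ x, |w x| ≤ M) → Bornology.IsBounded (range w) :=
    fun w ⟨M, hM⟩ => isBounded_iff_forall_norm_le.2 ⟨M, forall_mem_range.2 hM⟩
  have hle : ∀ u v : X → ℝ, (∃ M, ∀ x, |u x| ≤ M) → (∃ M, ∀ x, |v x| ≤ M) →
      (∀ x ∈ Y, u x = TugOfWar.avg ε μ u x + f x) →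
      (∀ x ∈ Y, v x = TugOfWar.avg ε μ v x + f x) → (∀ x ∉ Y, u x = v x) → u ≤ v :=
    fun u v hub hvb hu hv huv =>
      TugOfWar.le_of_subsolution_of_supersolution hε hμ0.le hμ1.le hlam hf (hbdd u hub)
        (hbdd v hvb) (fun x hx => (hu x hx).le) (fun x hx => (hv x hx).ge)
        fun x hx => (huv x hx).le
  have hYc : ∀ x ∉ Y, u x = v x := fun x hx => (huF x hx).trans (hvF x hx).symm
  exact le_antisymm (hle u v hubd hvbd hu hv hYc)
    (hle v u hvbd hubd hv hu fun x hx => (hYc x hx).symm)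

/-- Uniqueness for the metric-space tug-of-war DPP: in a metric space of finite
diameter, if every point of the domain `Y` is connected to the boundary
`X \ Y` by a chain of at most `N` steps of size `< ε`, and `F`, `f` are bounded
with `inf_Y f > 0`, then bounded solutions of the DPP
`u(x) = μ sup_{B_ε(x)} u + (1-μ) inf_{B_ε(x)} u + f(x)` on `Y`, `u = F` off `Y`,
are unique. -/
theorem metric_dpp_uniqueness {X : Type} [MetricSpace X]
    (hdiam : Bornology.IsBounded (Set.univ : Set X))
    (Y : Set X) (hY : Y.Nonempty) (hYc : Yᶜ.Nonempty)
    (ε : ℝ) (hε : 0 < ε) (N : ℕ)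
    (hchain : ∀ x ∈ Y, ∃ m ≤ N, ∃ c : ℕ → X, c 0 = x ∧ c m ∉ Y ∧
      ∀ i < m, dist (c (i + 1)) (c i) < ε)
    (μ : ℝ) (hμ0 : 0 < μ) (hμ1 : μ < 1)
    (f F : X → ℝ) (hFf : ∃ M, ∀ x, |F x| + |f x| ≤ M)
    (hfpos : ∃ lam > (0 : ℝ), ∀ x ∈ Y, lam ≤ f x)
    (u v : X → ℝ)
    (hubd : ∃ M, ∀ x, |u x| ≤ M) (hvbd : ∃ M, ∀ x, |v x| ≤ M)
    (hu : ∀ x ∈ Y, u x = μ * sSup (u '' Metric.ball x ε) +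
      (1 - μ) * sInf (u '' Metric.ball x ε) + f x)
    (huF : ∀ x ∉ Y, u x = F x)
    (hv : ∀ x ∈ Y, v x = μ * sSup (v '' Metric.ball x ε) +
      (1 - μ) * sInf (v '' Metric.ball x ε) + f x)
    (hvF : ∀ x ∉ Y, v x = F x) :
    u = v :=
  metric_dpp_uniqueness_general Y ε hε μ hμ0 hμ1 f F hfpos u v hubd hvbd hu huF hv hvF
end
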